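/- arXiv:1803.05702 — 3 statements merged into one kernel-verified Lean document; each statement's English description precedes it below -/
import Mathlib

section
/- Let f_1, ..., f_L : ℝ → ℝ be monotone non-decreasing functions such that f_1(x) ≤ f_2(x) ≤ ... ≤ f_L(x) for all x ∈ ℝ. Then for any values x_1 ≥ x_2 ≥ ... ≥ x_L, the maximum over all permutations π of {1,...,L} of min_{ℓ ∈ [L]} f_ℓ(x_{π(ℓ)}) is achieved by the identity permutation, i.e., max_π min_ℓ f_ℓ(x_{π(ℓ)}) = min_ℓ f_ℓ(x_ℓ). -/
/-!
If `σ` is injective, then among `ℓ ≤ m` (there are more of them than elements `< m`) some `ℓ` has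
`σ ℓ ≥ m`. For that `ℓ`, `f ℓ (x (σ ℓ)) ≤ f m (x (σ ℓ)) ≤ f m (x m)`, so every term of the
identity's minimum dominates the minimum for `σ`.
-/

open Finset Function

theorem Function.Injective.exists_le_and_le_apply {α : Type*} [LinearOrder α]
    [LocallyFiniteOrderBot α] {σ : α → α} (hσ : Injective σ) (m : α) :
    ∃ ℓ ≤ m, m ≤ σ ℓ := by
  by_contra! h
  have hcard : #(Iic m) ≤ #(Iio m) :=
    card_le_card_of_injOn σ (fun a ha => mem_Iio.2 (h a (mem_Iic.1 ha))) hσ.injOn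
  classical
  rw [← Iio_insert, card_insert_of_notMem notMem_Iio_self] at hcard
  omega

theorem inf'_apply_comp_injective_le {α β γ : Type*} [LinearOrder α] [LocallyFiniteOrderBot α]
    [Fintype α] [Preorder β] [SemilatticeInf γ] (hne : (univ : Finset α).Nonempty)
    {f : α → β → γ} (hf : Monotone f) (hf' : ∀ i, Monotone (f i)) {x : α → β}
    (hx : Antitone x) {σ : α → α} (hσ : Injective σ) :
    univ.inf' hne (fun ℓ => f ℓ (x (σ ℓ))) ≤ univ.inf' hne (fun ℓ => f ℓ (x ℓ)) := by
  refine le_inf' _ _ fun m _ => ?_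
  obtain ⟨ℓ, hℓm, hmσ⟩ := hσ.exists_le_and_le_apply m
  calc univ.inf' hne (fun ℓ => f ℓ (x (σ ℓ)))
      ≤ f ℓ (x (σ ℓ)) := inf'_le _ (mem_univ ℓ)
    _ ≤ f m (x (σ ℓ)) := hf hℓm _
    _ ≤ f m (x m) := hf' m (hx hmσ)

/-- Max-min permutation theorem: for monotone non-decreasing, pointwise ordered
functions `f 0 ≤ f 1 ≤ ... ≤ f (L-1)` and non-increasing inputs `x`, the maximum
over all permutations of the minimum of `f ℓ (x (π ℓ))` is achieved by the identity. -/
theorem stmt_0 (L : ℕ) (hL : 0 < L) (f : Fin L → ℝ → ℝ)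
    (hmono : ∀ i, Monotone (f i))
    (hord : ∀ i j : Fin L, i ≤ j → ∀ x : ℝ, f i x ≤ f j x)
    (x : Fin L → ℝ) (hx : ∀ i j : Fin L, i ≤ j → x j ≤ x i) :
    (Finset.univ.sup' ⟨1, Finset.mem_univ 1⟩
        (fun π : Equiv.Perm (Fin L) =>
          Finset.univ.inf' ⟨⟨0, hL⟩, Finset.mem_univ _⟩ (fun ℓ => f ℓ (x (π ℓ)))))
      = Finset.univ.inf' ⟨⟨0, hL⟩, Finset.mem_univ _⟩ (fun ℓ => f ℓ (x ℓ)) :=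
  le_antisymm
    (sup'_le _ _ fun π _ =>
      inf'_apply_comp_injective_le _ (fun i j h => hord i j h) hmono (fun i j h => hx i j h)
        π.injective)
    (le_sup'_of_le _ (mem_univ 1) le_rfl)
end

section
/- If f_1, ..., f_L : ℝ → ℝ are monotone non-decreasing with f_i ≤ f_{i'} pointwise for i ≤ i', and x_1 ≥ ... ≥ x_L, then for any permutation π and any pair i < i' with π(i) > π(i'), the permutation π' obtained from π by swapping the values at i and i' satisfies min_ℓ f_ℓ(x_{π'(ℓ)}) ≥ min_ℓ f_ℓ(x_{π(ℓ)}). -/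
/-!
Every value of the swapped family dominates some value of the original one: at `i` the new
argument `x (π i')` is at least `x (π i)` because `x` is antitone and `π i' ≤ π i`; at `i'` the
old value `f i (x (π i))` is at most `f i' (x (π i))` because the `f ℓ` increase with `ℓ`; all
other positions are unchanged.
-/

open Equiv

lemma Finset.inf'_le_inf'_of_forall_exists_le {ι α : Type*} [SemilatticeInf α] {s : Finset ι}
    (hs : s.Nonempty) {g h : ι → α} (hgh : ∀ ℓ ∈ s, ∃ m ∈ s, g m ≤ h ℓ) :
    s.inf' hs g ≤ s.inf' hs h :=
  Finset.le_inf' hs h fun ℓ hℓ ↦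
    let ⟨_, hm, hle⟩ := hgh ℓ hℓ
    (Finset.inf'_le g hm).trans hle

lemma exists_le_apply_mul_swap {ι α β : Type*} [Preorder ι] [DecidableEq ι] [Preorder α]
    [Preorder β] {f : ι → α → β} (hf : ∀ ℓ, Monotone (f ℓ)) (hf' : Monotone f) {x : ι → α}
    (hx : Antitone x) {π : Perm ι} {i i' : ι} (hii' : i ≤ i') (hinv : π i' ≤ π i) (ℓ : ι) :
    ∃ m, f m (x (π m)) ≤ f ℓ (x ((π * swap i i') ℓ)) := by
  rcases eq_or_ne ℓ i with rfl | hℓi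
  · exact ⟨ℓ, by simpa using hf ℓ (hx hinv)⟩
  rcases eq_or_ne ℓ i' with rfl | hℓi'
  · exact ⟨i, by simpa using hf' hii' (x (π i))⟩
  · exact ⟨ℓ, by simp [swap_apply_of_ne_of_ne hℓi hℓi']⟩

/-- Minimum non-decreasing transposition lemma: swapping the values of a
permutation at an inversion pair does not decrease the minimum of
`f ℓ (x (π ℓ))`. -/
theorem stmt_2 (L : ℕ) (hL : 0 < L) (f : Fin L → ℝ → ℝ)
    (hmono : ∀ i, Monotone (f i))
    (hord : ∀ i j : Fin L, i ≤ j → ∀ x : ℝ, f i x ≤ f j x)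
    (x : Fin L → ℝ) (hx : ∀ i j : Fin L, i ≤ j → x j ≤ x i)
    (π : Equiv.Perm (Fin L)) (i i' : Fin L) (hii' : i < i') (hinv : π i' < π i) :
    Finset.univ.inf' ⟨⟨0, hL⟩, Finset.mem_univ _⟩ (fun ℓ => f ℓ (x (π ℓ)))
      ≤ Finset.univ.inf' ⟨⟨0, hL⟩, Finset.mem_univ _⟩
          (fun ℓ => f ℓ (x ((π * Equiv.swap i i') ℓ))) := by
  refine Finset.inf'_le_inf'_of_forall_exists_le _ fun ℓ _ ↦ ?_
  obtain ⟨m, hm⟩ := exists_le_apply_mul_swap hmono (fun a b hab ↦ hord a b hab)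
    (fun a b hab ↦ hx a b hab) hii'.le hinv.le ℓ
  exact ⟨m, Finset.mem_univ m, hm⟩
end

section
/- Let U ~ Gamma(L,1) and X ~ Gamma(M,1) be independent, and set W = ((η-2)/2)·X/U for η > 2. Then P(W ≤ γ) = 1 - Σ_{m=0}^{M-1} ((m+L-1)!/(m!(L-1)!)) · (2γ/(η-2))^m / (1 + 2γ/(η-2))^{m+L} for all γ ≥ 0. -/
/-!
Conditionally on `U = u`, the event `W ≤ γ` is `X ≤ c u` with `c = 2γ/(η-2)`, whose probability
is the Erlang CDF `1 - e^{-cu} ∑_{m<M} (cu)^m/m!`. Integrating against the `Gamma(L,1)` density,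
each term `u^{m+L-1} e^{-(1+c)u}` is a Gamma integral `(m+L-1)!/(1+c)^{m+L}`.
-/

open MeasureTheory Real Set
open scoped Nat

/-- The CDF on `[0, ∞)` of the Erlang distribution `Gamma(n, 1)`, `n ≥ 1`. -/
noncomputable def erlangCDF (n : ℕ) (t : ℝ) : ℝ :=
  1 - exp (-t) * ∑ m ∈ Finset.range n, t ^ m / m !

lemma erlangCDF_zero_right (n : ℕ) : erlangCDF (n + 1) 0 = 0 := by
  simp [erlangCDF, Finset.sum_range_succ']

lemma hasDerivAt_sum_range_pow_div_factorial (n : ℕ) (y : ℝ) :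
    HasDerivAt (fun y : ℝ => ∑ m ∈ Finset.range (n + 1), y ^ m / m !)
      (∑ m ∈ Finset.range n, y ^ m / m !) y := by
  have h := HasDerivAt.fun_sum (u := Finset.range (n + 1)) (x := y)
    fun m _ => (hasDerivAt_pow m y).div_const (m ! : ℝ)
  refine h.congr_deriv ?_
  rw [Finset.sum_range_succ']
  simp only [Nat.cast_zero, zero_mul, zero_div, add_zero]
  refine Finset.sum_congr rfl fun m _ => ?_
  rw [Nat.add_sub_cancel, Nat.factorial_succ]
  push_cast
  field_simp

lemma hasDerivAt_erlangCDF (n : ℕ) (y : ℝ) :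
    HasDerivAt (erlangCDF (n + 1)) (y ^ n * exp (-y) / n !) y := by
  have hexp : HasDerivAt (fun y : ℝ => exp (-y)) (-exp (-y)) y := by
    simpa using (hasDerivAt_neg y).exp
  have h := ((hexp.mul (hasDerivAt_sum_range_pow_div_factorial n y)).const_sub 1)
  refine h.congr_deriv ?_
  rw [Finset.sum_range_succ]
  ring

lemma intervalIntegral_pow_mul_exp_neg_div_factorial (n : ℕ) (t : ℝ) :
    ∫ x in (0 : ℝ)..t, x ^ n * exp (-x) / n ! = erlangCDF (n + 1) t := by
  have hcont : Continuous fun x : ℝ => x ^ n * exp (-x) / n ! := by fun_prop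
  rw [intervalIntegral.integral_eq_sub_of_hasDerivAt (fun y _ => hasDerivAt_erlangCDF n y)
    (hcont.intervalIntegrable 0 t), erlangCDF_zero_right, sub_zero]

lemma integral_Ioi_ite_le_pow_mul_exp_neg_div_factorial (n : ℕ) {t : ℝ} (ht : 0 ≤ t) :
    ∫ x in Ioi (0 : ℝ), (if x ≤ t then x ^ n * exp (-x) / n ! else 0) = erlangCDF (n + 1) t := by
  have hind : ∀ x, (if x ≤ t then x ^ n * exp (-x) / n ! else 0)
      = (Iic t).indicator (fun x => x ^ n * exp (-x) / n !) x := fun x => rfl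
  simp_rw [hind]
  rw [setIntegral_indicator measurableSet_Iic, Ioi_inter_Iic,
    ← intervalIntegral.integral_of_le ht, intervalIntegral_pow_mul_exp_neg_div_factorial]

lemma integral_Ioi_pow_mul_exp_neg_mul (k : ℕ) {a : ℝ} (ha : 0 < a) :
    ∫ u in Ioi (0 : ℝ), u ^ k * exp (-(a * u)) = k ! / a ^ (k + 1) := by
  have h := integral_rpow_mul_exp_neg_mul_Ioi (a := k + 1) (by positivity) ha
  simp only [add_sub_cancel_right, rpow_natCast] at h
  rw [h, Gamma_nat_eq_factorial, div_rpow zero_le_one ha.le, one_rpow,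
    ← Nat.cast_add_one, rpow_natCast]
  ring

lemma integrableOn_Ioi_pow_mul_exp_neg_mul (k : ℕ) {a : ℝ} (ha : 0 < a) :
    IntegrableOn (fun u : ℝ => u ^ k * exp (-(a * u))) (Ioi 0) :=
  .of_integral_ne_zero (by rw [integral_Ioi_pow_mul_exp_neg_mul k ha]; positivity)

lemma integral_Ioi_pow_mul_exp_neg_mul_erlangCDF (k n : ℕ) {c : ℝ} (hc : 0 < 1 + c) :
    ∫ u in Ioi (0 : ℝ), u ^ k * exp (-u) / k ! * erlangCDF (n + 1) (c * u)
      = 1 - ∑ m ∈ Finset.range (n + 1),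
          ((m + k) ! : ℝ) / (m ! * k !) * c ^ m / (1 + c) ^ (m + k + 1) := by
  have hexpand : ∀ u : ℝ, u ^ k * exp (-u) / k ! * erlangCDF (n + 1) (c * u)
      = u ^ k * exp (-(1 * u)) / (k !) - ∑ m ∈ Finset.range (n + 1),
          c ^ m / (m ! * k !) * (u ^ (m + k) * exp (-((1 + c) * u))) := by
    intro u
    have hexp : exp (-((1 + c) * u)) = exp (-u) * exp (-(c * u)) := by
      rw [← exp_add]; ring_nf
    rw [erlangCDF, mul_sub, mul_one, one_mul, Finset.mul_sum, Finset.mul_sum]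
    congr 1
    refine Finset.sum_congr rfl fun m _ => ?_
    rw [hexp]
    ring
  have hint : ∀ m ∈ Finset.range (n + 1), IntegrableOn
      (fun u : ℝ => c ^ m / (m ! * k !) * (u ^ (m + k) * exp (-((1 + c) * u)))) (Ioi 0) :=
    fun m _ => (integrableOn_Ioi_pow_mul_exp_neg_mul (m + k) hc).const_mul _
  simp_rw [hexpand]
  rw [integral_sub ((integrableOn_Ioi_pow_mul_exp_neg_mul k one_pos).div_const _)
      (integrable_finsetSum _ hint), integral_finsetSum _ hint, integral_div,
    integral_Ioi_pow_mul_exp_neg_mul k one_pos]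
  simp only [integral_const_mul, integral_Ioi_pow_mul_exp_neg_mul _ hc]
  congr 1
  · simp [Nat.factorial_ne_zero]
  · refine Finset.sum_congr rfl fun m _ => ?_
    ring

/-- Unconditional SIR CDF for the worst stream: with `U ~ Gamma(L,1)` and
`X ~ Gamma(M,1)` independent and `W = ((η-2)/2)·X/U`,
`P(W ≤ γ) = 1 - Σ_{m=0}^{M-1} ((m+L-1)!/(m!(L-1)!)) (2γ/(η-2))^m / (1+2γ/(η-2))^{m+L}`. -/
theorem stmt_16 (L M : ℕ) (hL : 1 ≤ L) (hM : 1 ≤ M) (η γ : ℝ) (hη : 2 < η) (hγ : 0 ≤ γ) :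
    (∫ u in Set.Ioi (0 : ℝ), ∫ x in Set.Ioi (0 : ℝ),
        (if ((η - 2) / 2) * x / u ≤ γ then
          (u ^ (L - 1) * Real.exp (-u) / (Nat.factorial (L - 1)))
            * (x ^ (M - 1) * Real.exp (-x) / (Nat.factorial (M - 1))) else 0))
      = 1 - ∑ m ∈ Finset.range M,
          ((Nat.factorial (m + L - 1) : ℝ) / (Nat.factorial m * Nat.factorial (L - 1)))
            * (2 * γ / (η - 2)) ^ m / (1 + 2 * γ / (η - 2)) ^ (m + L) := by
  obtain ⟨n, rfl⟩ : ∃ n, M = n + 1 := ⟨M - 1, by omega⟩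
  obtain ⟨k, rfl⟩ : ∃ k, L = k + 1 := ⟨L - 1, by omega⟩
  have hη' : 0 < η - 2 := by linarith
  have hevent : ∀ u > 0, ∀ x, ((η - 2) / 2) * x / u ≤ γ ↔ x ≤ 2 * γ / (η - 2) * u :=
    fun u hu x => by
      rw [div_le_iff₀ hu, div_mul_eq_mul_div, div_mul_eq_mul_div, le_div_iff₀ hη',
        div_le_iff₀ two_pos]
      constructor <;> intro h <;> linarith
  set c := 2 * γ / (η - 2)
  have hc : 0 ≤ c := by positivity
  have hinner : ∀ u ∈ Ioi (0 : ℝ), ∫ x in Ioi (0 : ℝ),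
      (if ((η - 2) / 2) * x / u ≤ γ then
        u ^ k * exp (-u) / k ! * (x ^ n * exp (-x) / n !) else 0)
      = u ^ k * exp (-u) / k ! * erlangCDF (n + 1) (c * u) := fun u hu => by
    simp_rw [hevent u hu, ← mul_ite_zero]
    rw [integral_const_mul,
      integral_Ioi_ite_le_pow_mul_exp_neg_div_factorial n (mul_nonneg hc hu.le)]
  simp only [Nat.add_sub_cancel, ← add_assoc]
  rw [setIntegral_congr_fun measurableSet_Ioi hinner,
    integral_Ioi_pow_mul_exp_neg_mul_erlangCDF k n (by linarith)]
end
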